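/- arXiv:1707.00047 — 2 statements merged into one kernel-verified Lean document; each statement's English description precedes it below -/
import Mathlib

section
/- Let n ≥ 1, let ψ and φ be positive semidefinite n×n complex matrices, and let α ∈ [1/2, 1). Then the infimum, over all n×n positive definite density matrices σ, of Tr[σ^{(α−1)/α} · ψ^{1/2} φ^{(1−α)/α} ψ^{1/2}] equals (Tr[(φ^{(1−α)/(2α)} ψ φ^{(1−α)/(2α)})^α])^{1/α}. (This identifies the Araki–Masuda variational expression for the sandwiched Rényi divergence of order α ∈ [1/2,1) with the closed trace formula, as in Theorem 2.4(ii) of the paper.) -/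
/-!
With `β = (1 - α) / α` and `X = φ^{β/2} ψ^{1/2}`, the matrix in the infimum is `M = XᴴX`, while the
right-hand side is `(Tr (XXᴴ)^α)^{1/α} = (∑ λᵢ^α)^{1/α}` over the eigenvalues `λᵢ` of `M`.
If `σ` has eigenvalues `sⱼ`, then `Tr σ^{-β} M = ∑ⱼᵢ sⱼ^{-β} λᵢ |Wⱼᵢ|²` for a unitary `W`, and
`(|Wⱼᵢ|²)` is doubly stochastic, so Hölder's inequality for the probability weights `|Wⱼᵢ|² sⱼ`
gives the lower bound. The density matrices `σ_ε ∝ M^α + ε`, which commute with `M`, attain it in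
the limit `ε → 0⁺`.
-/

open Matrix
open scoped ComplexOrder

/-- Real power of a matrix, defined via the spectral decomposition when the matrix is
Hermitian (applying the real power function to the eigenvalues), and `0` otherwise. -/
noncomputable def mpow {n : ℕ} (A : Matrix (Fin n) (Fin n) ℂ) (r : ℝ) :
    Matrix (Fin n) (Fin n) ℂ :=
  if hA : A.IsHermitian then
    (hA.eigenvectorUnitary : Matrix (Fin n) (Fin n) ℂ) *
      Matrix.diagonal (fun i => ((hA.eigenvalues i ^ r : ℝ) : ℂ)) *
      (star hA.eigenvectorUnitary : Matrix (Fin n) (Fin n) ℂ)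
  else 0

open Filter Topology Unitary
open scoped MatrixOrder

section

variable {ι : Type*} [Fintype ι]

lemma sum_rpow_div_rpow_mul_eq {e : ι → ℝ} (he : ∀ i, 0 ≤ e i) {α : ℝ} (hα0 : 0 < α) :
    ∑ i, (e i ^ α / ∑ k, e k ^ α) ^ ((α - 1) / α) * e i = (∑ k, e k ^ α) ^ (1 / α) := by
  have hT : 0 ≤ ∑ k, e k ^ α := Finset.sum_nonneg fun k _ => Real.rpow_nonneg (he k) α
  have hterm (i : ι) : (e i ^ α / ∑ k, e k ^ α) ^ ((α - 1) / α) * e i =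
      e i ^ α / (∑ k, e k ^ α) ^ ((α - 1) / α) := by
    rw [Real.div_rpow (Real.rpow_nonneg (he i) α) hT, ← Real.rpow_mul (he i),
      mul_div_cancel₀ _ hα0.ne', div_mul_eq_mul_div,
      ← Real.rpow_add_one' (he i) (by simp [hα0.ne']), sub_add_cancel]
  have hexp : 1 - (α - 1) / α = 1 / α := by field_simp; ring
  rw [Finset.sum_congr rfl fun i _ => hterm i, ← Finset.sum_div,
    ← Real.rpow_one_sub' hT (by rw [hexp]; positivity), hexp]

lemma tendsto_sum_regularized_rpow_mul {e : ι → ℝ} (he : ∀ i, 0 ≤ e i) {α : ℝ} (hα0 : 0 < α) :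
    Tendsto (fun ε : ℝ =>
        ∑ i, ((e i ^ α + ε) / (∑ k, e k ^ α + Fintype.card ι * ε)) ^ ((α - 1) / α) * e i)
      (𝓝 0) (𝓝 ((∑ k, e k ^ α) ^ (1 / α))) := by
  rw [← sum_rpow_div_rpow_mul_eq he hα0]
  refine tendsto_finsetSum _ fun i _ => ?_
  -- The exponent is negative for `α < 1`, so continuity is only available where `e i > 0`;
  -- a term with `e i = 0` vanishes identically.
  rcases (he i).eq_or_lt with hei | hei
  · simp only [← hei, mul_zero, tendsto_const_nhds]
  have hT : 0 < ∑ k, e k ^ α :=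
    (Real.rpow_pos_of_pos hei α).trans_le
      (Finset.single_le_sum (fun k _ => Real.rpow_nonneg (he k) α) (Finset.mem_univ i))
  have hcont : ContinuousAt (fun ε : ℝ =>
      ((e i ^ α + ε) / (∑ k, e k ^ α + Fintype.card ι * ε)) ^ ((α - 1) / α) * e i) 0 := by
    refine (ContinuousAt.rpow_const ?_ (Or.inl ?_)).mul continuousAt_const
    · exact ContinuousAt.div (by fun_prop) (by fun_prop) (by simpa using hT.ne')
    · simp only [add_zero, mul_zero]
      positivity
  simpa using hcont.tendsto

end

namespace Matrix

variable {ι 𝕜 : Type*} [Fintype ι] [DecidableEq ι] [RCLike 𝕜]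

lemma continuousOn_spectrum_real (A : Matrix ι ι 𝕜) (f : ℝ → ℝ) :
    ContinuousOn f (spectrum ℝ A) :=
  A.finite_real_spectrum.continuousOn f

namespace IsHermitian

variable {A : Matrix ι ι 𝕜} (hA : A.IsHermitian)

lemma cfc_eq_conj (f : ℝ → ℝ) :
    cfc f A = (hA.eigenvectorUnitary : Matrix ι ι 𝕜) *
      diagonal (RCLike.ofReal ∘ f ∘ hA.eigenvalues) *
      (star hA.eigenvectorUnitary : Matrix ι ι 𝕜) := by
  rw [hA.cfc_eq, IsHermitian.cfc, conjStarAlgAut_apply]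

lemma trace_cfc (f : ℝ → ℝ) : (cfc f A).trace = ((∑ i, f (hA.eigenvalues i) : ℝ) : 𝕜) := by
  rw [hA.cfc_eq_conj, trace_mul_cycle, coe_star_mul_self, one_mul, trace_diagonal,
    RCLike.ofReal_sum]
  rfl

lemma cfc_posDef {f : ℝ → ℝ} (hf : ∀ i, 0 < f (hA.eigenvalues i)) : (cfc f A).PosDef := by
  rw [← isStrictlyPositive_iff_posDef, cfc_isStrictlyPositive_iff f A
    (A.continuousOn_spectrum_real f) hA.isSelfAdjoint, hA.spectrum_real_eq_range_eigenvalues]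
  rintro - ⟨i, rfl⟩
  exact hf i

lemma trace_cfc_cfc_mul_self (f g : ℝ → ℝ) :
    (cfc f (cfc g A) * A).trace = ((∑ i, f (g (hA.eigenvalues i)) * hA.eigenvalues i : ℝ) : 𝕜) := by
  rw [← cfc_comp f g A hA.isSelfAdjoint ((A.finite_real_spectrum.image g).continuousOn f)
    (A.continuousOn_spectrum_real g)]
  conv_lhs => enter [1, 2]; rw [← cfc_id' ℝ A hA.isSelfAdjoint]
  rw [← cfc_mul _ _ A (A.continuousOn_spectrum_real _) (A.continuousOn_spectrum_real _),
    hA.trace_cfc]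
  rfl

end IsHermitian

lemma trace_cfc_conjTranspose_mul_self_comm (X : Matrix ι ι 𝕜) (f : ℝ → ℝ) :
    (cfc f (Xᴴ * X)).trace = (cfc f (X * Xᴴ)).trace := by
  have hM := isHermitian_conjTranspose_mul_self X
  have hN := isHermitian_mul_conjTranspose_self X
  have h : hM.eigenvalues = hN.eigenvalues :=
    (hM.eigenvalues_eq_eigenvalues_iff hN).mpr (charpoly_mul_comm _ _)
  rw [hM.trace_cfc, hN.trace_cfc, h]

lemma normSq_entries_mem_doublyStochastic {W : Matrix ι ι 𝕜} (hW : W ∈ unitaryGroup ι 𝕜) :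
    (of fun i j => ‖W i j‖ ^ 2) ∈ doublyStochastic ℝ ι := by
  have hrow (i : ι) : ∑ j, ‖W i j‖ ^ 2 = 1 := by
    have h := congr_fun₂ (mem_unitaryGroup_iff.mp hW) i i
    simp only [mul_apply, star_apply, RCLike.star_def, RCLike.mul_conj, one_apply_eq] at h
    exact_mod_cast h
  have hcol (j : ι) : ∑ i, ‖W i j‖ ^ 2 = 1 := by
    have h := congr_fun₂ (mem_unitaryGroup_iff'.mp hW) j j
    simp only [mul_apply, star_apply, RCLike.star_def, RCLike.conj_mul, one_apply_eq] at h
    exact_mod_cast h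
  exact mem_doublyStochastic_iff_sum.mpr ⟨fun i j => by rw [of_apply]; positivity, hrow, hcol⟩

lemma re_trace_conj_diagonal_mul_conj_diagonal (U V : unitaryGroup ι 𝕜) (a b : ι → ℝ) :
    RCLike.re (((U : Matrix ι ι 𝕜) * diagonal (RCLike.ofReal ∘ a) * (star U : Matrix ι ι 𝕜)) *
      ((V : Matrix ι ι 𝕜) * diagonal (RCLike.ofReal ∘ b) * (star V : Matrix ι ι 𝕜))).trace =
      ∑ j, ∑ i, a j * b i * ‖((star U : Matrix ι ι 𝕜) * V) j i‖ ^ 2 := by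
  set W := (star U : Matrix ι ι 𝕜) * V
  have hconj : (U : Matrix ι ι 𝕜) * diagonal (RCLike.ofReal ∘ a) * (star U : Matrix ι ι 𝕜) *
      ((V : Matrix ι ι 𝕜) * diagonal (RCLike.ofReal ∘ b) * (star V : Matrix ι ι 𝕜)) =
      (U : Matrix ι ι 𝕜) *
        (diagonal (RCLike.ofReal ∘ a) * W * diagonal (RCLike.ofReal ∘ b) * star W) *
        (star U : Matrix ι ι 𝕜) := by
    simp only [W, star_mul, star_star, mul_assoc, mul_star_self_of_mem U.2, mul_one]
  rw [hconj, trace_mul_cycle, star_mul_self_of_mem U.2, one_mul]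
  simp only [trace, diag, mul_apply (M := _ * diagonal _), mul_diagonal, diagonal_mul, star_apply,
    RCLike.star_def, map_sum, Function.comp_apply]
  refine Finset.sum_congr rfl fun j _ => Finset.sum_congr rfl fun i _ => ?_
  have h : (a j : 𝕜) * W j i * b i * starRingEnd 𝕜 (W j i) =
      ((a j * b i * ‖W j i‖ ^ 2 : ℝ) : 𝕜) := by
    push_cast
    rw [← RCLike.mul_conj]
    ring
  rw [h, RCLike.ofReal_re]

lemma rpow_sum_rpow_le_sum_of_mem_doublyStochastic {D : Matrix ι ι ℝ}
    (hD : D ∈ doublyStochastic ℝ ι) {s e : ι → ℝ} (hs : ∀ j, 0 < s j) (hs1 : ∑ j, s j = 1)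
    (he : ∀ i, 0 ≤ e i) {α : ℝ} (hα0 : 0 < α) (hα1 : α ≤ 1) :
    (∑ i, e i ^ α) ^ (1 / α) ≤ ∑ j, ∑ i, s j ^ ((α - 1) / α) * e i * D j i := by
  have hD0 : ∀ j i, 0 ≤ D j i := fun j i => nonneg_of_mem_doublyStochastic hD
  set w : ι × ι → ℝ := fun p => D p.1 p.2 * s p.1
  set f : ι × ι → ℝ := fun p => e p.2 ^ α / s p.1
  have hwf : ∑ p, w p * f p = ∑ i, e i ^ α := by
    rw [Fintype.sum_prod_type, Finset.sum_comm]
    refine Finset.sum_congr rfl fun i _ => ?_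
    simp only [w, f, mul_assoc, mul_div_cancel₀ _ (hs _).ne', ← Finset.sum_mul,
      sum_col_of_mem_doublyStochastic hD, one_mul]
  have hw : ∑ p, w p = 1 := by
    rw [Fintype.sum_prod_type, ← hs1]
    refine Finset.sum_congr rfl fun j _ => ?_
    simp only [w, ← Finset.sum_mul, sum_row_of_mem_doublyStochastic hD, one_mul]
  have hwfp : ∑ p, w p * f p ^ α⁻¹ = ∑ j, ∑ i, s j ^ ((α - 1) / α) * e i * D j i := by
    rw [Fintype.sum_prod_type]
    refine Finset.sum_congr rfl fun j _ => Finset.sum_congr rfl fun i _ => ?_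
    have hs' := hs j
    simp only [w, f]
    rw [Real.div_rpow (Real.rpow_nonneg (he i) _) hs'.le, Real.rpow_rpow_inv (he i) hα0.ne',
      show (α - 1) / α = 1 - α⁻¹ by field_simp, Real.rpow_sub hs', Real.rpow_one]
    field_simp
  have key := Real.inner_le_weight_mul_Lp_of_nonneg Finset.univ (one_le_inv₀ hα0 |>.mpr hα1) w f
    (fun _ => mul_nonneg (hD0 _ _) (hs _).le)
    (fun _ => div_nonneg (Real.rpow_nonneg (he _) _) (hs _).le)
  rw [hwf, hw, hwfp, Real.one_rpow, one_mul, inv_inv] at key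
  calc (∑ i, e i ^ α) ^ (1 / α)
      ≤ ((∑ j, ∑ i, s j ^ ((α - 1) / α) * e i * D j i) ^ α) ^ (1 / α) := by
        gcongr
        exact Finset.sum_nonneg fun i _ => Real.rpow_nonneg (he i) _
    _ = ∑ j, ∑ i, s j ^ ((α - 1) / α) * e i * D j i := by
        rw [one_div, Real.rpow_rpow_inv _ hα0.ne']
        exact Finset.sum_nonneg fun j _ => Finset.sum_nonneg fun i _ =>
          mul_nonneg (mul_nonneg (Real.rpow_nonneg (hs j).le _) (he i)) (hD0 j i)

lemma rpow_sum_eigenvalues_le_re_trace_cfc_rpow_mul {M σ : Matrix ι ι 𝕜} (hM : M.PosSemidef)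
    (hσ : σ.PosDef) (hσ1 : σ.trace = 1) {α : ℝ} (hα0 : 0 < α) (hα1 : α ≤ 1) :
    (∑ i, hM.1.eigenvalues i ^ α) ^ (1 / α) ≤
      RCLike.re (cfc (fun x : ℝ => x ^ ((α - 1) / α)) σ * M).trace := by
  have hW : (star hσ.1.eigenvectorUnitary : Matrix ι ι 𝕜) * hM.1.eigenvectorUnitary ∈
      unitaryGroup ι 𝕜 :=
    mul_mem (Unitary.star_mem (SetLike.coe_mem _)) (SetLike.coe_mem _)
  have hs1 : ∑ j, hσ.1.eigenvalues j = 1 := by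
    have h := hσ.1.trace_eq_sum_eigenvalues
    rw [hσ1] at h
    exact_mod_cast h.symm
  conv_rhs => rw [hσ.1.cfc_eq_conj, hM.1.spectral_theorem, Unitary.conjStarAlgAut_apply,
    re_trace_conj_diagonal_mul_conj_diagonal]
  simpa only [of_apply, mul_assoc, Function.comp_apply] using
    rpow_sum_rpow_le_sum_of_mem_doublyStochastic (normSq_entries_mem_doublyStochastic hW)
      hσ.eigenvalues_pos hs1 hM.eigenvalues_nonneg hα0 hα1

theorem sInf_re_trace_cfc_rpow_mul_eq [Nonempty ι] {M : Matrix ι ι 𝕜} (hM : M.PosSemidef)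
    {α : ℝ} (hα0 : 0 < α) (hα1 : α ≤ 1) :
    sInf {x : ℝ | ∃ σ : Matrix ι ι 𝕜, σ.PosDef ∧ σ.trace = 1 ∧
        x = RCLike.re (cfc (fun t : ℝ => t ^ ((α - 1) / α)) σ * M).trace} =
      (∑ i, hM.1.eigenvalues i ^ α) ^ (1 / α) := by
  set S : Set ℝ := {x | ∃ σ : Matrix ι ι 𝕜, σ.PosDef ∧ σ.trace = 1 ∧
    x = RCLike.re (cfc (fun t : ℝ => t ^ ((α - 1) / α)) σ * M).trace}
  set e := hM.1.eigenvalues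
  set T := ∑ k, e k ^ α
  have hlower : T ^ (1 / α) ∈ lowerBounds S := by
    rintro _ ⟨σ, hσ, hσ1, rfl⟩
    exact rpow_sum_eigenvalues_le_re_trace_cfc_rpow_mul hM hσ hσ1 hα0 hα1
  have hmem (ε : ℝ) (hε : 0 < ε) :
      ∑ i, ((e i ^ α + ε) / (T + Fintype.card ι * ε)) ^ ((α - 1) / α) * e i ∈ S := by
    have hZ : 0 < T + Fintype.card ι * ε := by
      have : 0 ≤ T := Finset.sum_nonneg fun k _ => Real.rpow_nonneg (hM.eigenvalues_nonneg k) α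
      have : 0 < (Fintype.card ι : ℝ) := by exact_mod_cast Fintype.card_pos
      positivity
    refine ⟨cfc (fun t : ℝ => (t ^ α + ε) / (T + Fintype.card ι * ε)) M,
      hM.1.cfc_posDef fun i => by have := Real.rpow_nonneg (hM.eigenvalues_nonneg i) α; positivity,
      ?_, ?_⟩
    · rw [hM.1.trace_cfc, ← Finset.sum_div, Finset.sum_add_distrib, Finset.sum_const,
        Finset.card_univ, nsmul_eq_mul, div_self hZ.ne', RCLike.ofReal_one]
    · rw [hM.1.trace_cfc_cfc_mul_self, RCLike.ofReal_re]
  refine le_antisymm ?_ (le_csInf ⟨_, hmem 1 one_pos⟩ hlower)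
  exact ge_of_tendsto ((tendsto_sum_regularized_rpow_mul hM.eigenvalues_nonneg hα0).mono_left
    (nhdsWithin_le_nhds (s := Set.Ioi 0)))
    (eventually_nhdsWithin_of_forall fun ε hε => csInf_le ⟨_, hlower⟩ (hmem ε hε))

end Matrix

section

variable {n : ℕ}

lemma mpow_eq_cfc {A : Matrix (Fin n) (Fin n) ℂ} (hA : A.IsHermitian) (r : ℝ) :
    mpow A r = cfc (fun x : ℝ => x ^ r) A := by
  rw [mpow, dif_pos hA, hA.cfc_eq_conj]
  rfl

lemma mpow_mul_mpow {A : Matrix (Fin n) (Fin n) ℂ} (hA : A.PosSemidef) {r t : ℝ}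
    (hrt : r + t ≠ 0) : mpow A r * mpow A t = mpow A (r + t) := by
  rw [mpow_eq_cfc hA.1, mpow_eq_cfc hA.1, mpow_eq_cfc hA.1,
    ← cfc_mul _ _ A (A.continuousOn_spectrum_real _) (A.continuousOn_spectrum_real _)]
  refine cfc_congr fun x hx => (Real.rpow_add' ?_ hrt).symm
  rw [hA.1.spectrum_real_eq_range_eigenvalues] at hx
  obtain ⟨i, rfl⟩ := hx
  exact hA.eigenvalues_nonneg i

lemma mpow_half_mul_mpow_half {A : Matrix (Fin n) (Fin n) ℂ} (hA : A.PosSemidef) {r : ℝ}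
    (hr : r ≠ 0) : mpow A (r / 2) * mpow A (r / 2) = mpow A r := by
  rw [mpow_mul_mpow hA (by rwa [add_halves]), add_halves]

lemma mpow_one {A : Matrix (Fin n) (Fin n) ℂ} (hA : A.IsHermitian) : mpow A 1 = A := by
  simp only [mpow_eq_cfc hA, Real.rpow_one, cfc_id' ℝ A hA.isSelfAdjoint]

lemma mpow_isHermitian (A : Matrix (Fin n) (Fin n) ℂ) (r : ℝ) : (mpow A r).IsHermitian := by
  by_cases hA : A.IsHermitian
  · rw [mpow_eq_cfc hA]; exact cfc_predicate _ _
  · rw [mpow, dif_neg hA]; exact isHermitian_zero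

lemma mpow_mul_mpow_mul_mpow_eq_conjTranspose_mul_self {A B : Matrix (Fin n) (Fin n) ℂ}
    (hB : B.PosSemidef) {r : ℝ} (hr : r ≠ 0) (s : ℝ) :
    mpow A s * mpow B r * mpow A s =
      (mpow B (r / 2) * mpow A s)ᴴ * (mpow B (r / 2) * mpow A s) := by
  rw [conjTranspose_mul, (mpow_isHermitian _ _).eq, (mpow_isHermitian _ _).eq,
    ← mpow_half_mul_mpow_half hB hr]
  simp only [mul_assoc]

lemma mpow_mul_mul_mpow_eq_mul_conjTranspose_self {A : Matrix (Fin n) (Fin n) ℂ}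
    (hA : A.PosSemidef) (B : Matrix (Fin n) (Fin n) ℂ) (r : ℝ) :
    mpow B r * A * mpow B r = (mpow B r * mpow A (1 / 2)) * (mpow B r * mpow A (1 / 2))ᴴ := by
  conv_lhs => rw [← mpow_one hA.1, ← mpow_half_mul_mpow_half hA one_ne_zero]
  rw [conjTranspose_mul, (mpow_isHermitian _ _).eq, (mpow_isHermitian _ _).eq]
  simp only [mul_assoc]

lemma sInf_re_trace_mpow_mul_eq [Nonempty (Fin n)] {M : Matrix (Fin n) (Fin n) ℂ}
    (hM : M.PosSemidef) {α : ℝ} (hα0 : 0 < α) (hα1 : α ≤ 1) :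
    sInf {x : ℝ | ∃ σ : Matrix (Fin n) (Fin n) ℂ, σ.PosDef ∧ σ.trace = 1 ∧
        x = (Matrix.trace (mpow σ ((α - 1) / α) * M)).re} =
      (∑ i, hM.1.eigenvalues i ^ α) ^ (1 / α) := by
  rw [← sInf_re_trace_cfc_rpow_mul_eq hM hα0 hα1]
  refine congrArg sInf (Set.ext fun x => exists_congr fun σ => and_congr_right fun hσ => ?_)
  rw [mpow_eq_cfc hσ.1, RCLike.re_to_complex]

lemma re_trace_mpow_mul_conjTranspose_self (X : Matrix (Fin n) (Fin n) ℂ) (r : ℝ) :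
    (mpow (X * Xᴴ) r).trace.re =
      ∑ i, (isHermitian_conjTranspose_mul_self X).eigenvalues i ^ r := by
  rw [mpow_eq_cfc (isHermitian_mul_conjTranspose_self X), ← trace_cfc_conjTranspose_mul_self_comm,
    (isHermitian_conjTranspose_mul_self X).trace_cfc, ← RCLike.re_to_complex, RCLike.ofReal_re]

end

theorem araki_masuda_variational_inf {n : ℕ} (hn : 1 ≤ n)
    (ψ φ : Matrix (Fin n) (Fin n) ℂ) (hψ : ψ.PosSemidef) (hφ : φ.PosSemidef)
    (α : ℝ) (hα₁ : 1 / 2 ≤ α) (hα₂ : α < 1) :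
    sInf {x : ℝ | ∃ σ : Matrix (Fin n) (Fin n) ℂ, σ.PosDef ∧ σ.trace = 1 ∧
        x = (Matrix.trace (mpow σ ((α - 1) / α) *
          (mpow ψ (1 / 2) * mpow φ ((1 - α) / α) * mpow ψ (1 / 2)))).re} =
      ((Matrix.trace (mpow (mpow φ ((1 - α) / (2 * α)) * ψ * mpow φ ((1 - α) / (2 * α))) α)).re)
        ^ (1 / α) := by
  have hα0 : 0 < α := by linarith
  have : Nonempty (Fin n) := ⟨⟨0, hn⟩⟩
  have hβ : (1 - α) / α ≠ 0 := (div_pos (by linarith) hα0).ne'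
  rw [mpow_mul_mpow_mul_mpow_eq_conjTranspose_mul_self hφ hβ,
    show (1 - α) / (2 * α) = (1 - α) / α / 2 by ring,
    mpow_mul_mul_mpow_eq_mul_conjTranspose_self hψ, re_trace_mpow_mul_conjTranspose_self,
    sInf_re_trace_mpow_mul_eq (posSemidef_conjTranspose_mul_self _) hα0 hα₂.le]
end

section
/- Let φ be a positive semidefinite n×n complex matrix and let k be an n×n complex matrix. Then the following are equivalent: (i) there exists a constant C ≥ 0 such that Tr(kᴴ aᴴ a k) ≤ C · Tr(φ^{1/2} aᴴ a φ^{1/2}) for all n×n complex matrices a; (ii) there exists an n×n complex matrix y such that k = φ^{1/2} y. (Finite-dimensional form of the majorization criterion used in the definition of the spatial derivative in the Appendix: the vector functional of k is dominated by a multiple of φ if and only if k lies in φ^{1/2}·M_n(ℂ).) -/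
open Matrix
open scoped ComplexOrder

/-!
With `ψ = φ^{1/2}` Hermitian, both traces are squared Frobenius norms: the inequality reads
`‖a k‖² ≤ C ‖a ψ‖²`. If `k = ψ y` this holds with `C = ‖y‖²` by submultiplicativity. Conversely
it forces `a k = 0` whenever `a ψ = 0`; taking for `a` a matrix whose rows are a linear functional
vanishing on the column space of `ψ` shows, by duality, that every column of `k` lies in the
column space of `ψ`, which is the factorization `k = ψ y`.
-/

attribute [local instance] Matrix.frobeniusNormedAddCommGroup

namespace Matrix

section Factorization

variable {K : Type*} [Field K] {m p q : Type*} [Fintype p] [DecidableEq p] [Fintype q]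
  [DecidableEq q]

theorem range_toLin'_le_of_forall_mul_eq_zero [Fintype m] [DecidableEq m] {ψ : Matrix m p K}
    {k : Matrix m q K} (h : ∀ a : Matrix m m K, a * ψ = 0 → a * k = 0) :
    LinearMap.range (toLin' k) ≤ LinearMap.range (toLin' ψ) := by
  rcases isEmpty_or_nonempty m with hm | hm
  · intro v _
    rw [Subsingleton.elim v 0]
    exact zero_mem _
  rw [← Subspace.dualAnnihilator_le_dualAnnihilator_iff]
  intro f hf
  rw [Submodule.mem_dualAnnihilator] at hf ⊢
  set F := f.smulRight (1 : m → K)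
  have hFψ : F ∘ₗ toLin' ψ = 0 :=
    LinearMap.ext fun v => by simp [F, hf (ψ *ᵥ v) ⟨v, toLin'_apply ψ v⟩]
  have hFk : F ∘ₗ toLin' k = 0 := by
    have hak := h (LinearMap.toMatrix' F) <| (LinearEquiv.map_eq_zero_iff toLin').mp <| by
      rw [toLin'_mul, toLin'_toMatrix', hFψ]
    simpa [toLin'_mul] using congrArg toLin' hak
  rintro _ ⟨v, rfl⟩
  simpa [F] using LinearMap.congr_fun hFk v

theorem exists_eq_mul_of_range_toLin'_le {ψ : Matrix m p K} {k : Matrix m q K}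
    (h : LinearMap.range (toLin' k) ≤ LinearMap.range (toLin' ψ)) :
    ∃ y : Matrix p q K, k = ψ * y := by
  have hcol (j : q) : ∃ x, ψ *ᵥ x = k.col j := h ⟨Pi.single j 1, by simp⟩
  choose x hx using hcol
  exact ⟨(of x)ᵀ, ext fun i j => (congrFun (hx j) i).symm⟩

end Factorization

theorem re_trace_conjTranspose_mul_self {𝕜 m n : Type*} [RCLike 𝕜] [Fintype m] [Fintype n]
    (B : Matrix m n 𝕜) : RCLike.re (Bᴴ * B).trace = ‖B‖ ^ 2 := by
  rw [frobenius_norm_def, ← Real.sqrt_eq_rpow, Real.sq_sqrt (by positivity), Finset.sum_comm]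
  simp [trace, mul_apply, RCLike.conj_mul]

theorem re_trace_conjTranspose_mul_conjTranspose_mul_mul {𝕜 l m n : Type*} [RCLike 𝕜]
    [Fintype l] [Fintype m] [Fintype n] (a : Matrix l m 𝕜) (b : Matrix m n 𝕜) :
    RCLike.re (bᴴ * aᴴ * a * b).trace = ‖a * b‖ ^ 2 := by
  rw [← re_trace_conjTranspose_mul_self, conjTranspose_mul]
  simp only [Matrix.mul_assoc]

end Matrix

theorem isHermitian_mpow {n : ℕ} (A : Matrix (Fin n) (Fin n) ℂ) (r : ℝ) :
    (mpow A r).IsHermitian := by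
  unfold mpow
  split_ifs
  · exact isHermitian_mul_mul_conjTranspose _
      (isHermitian_diagonal_iff.mpr fun _ => Complex.conj_ofReal _)
  · exact isHermitian_zero

theorem majorization_iff_factors_general {n : ℕ}
    (φ k : Matrix (Fin n) (Fin n) ℂ) :
    (∃ C : ℝ, 0 ≤ C ∧ ∀ a : Matrix (Fin n) (Fin n) ℂ,
        (Matrix.trace (kᴴ * aᴴ * a * k)).re ≤
          C * (Matrix.trace (mpow φ (1 / 2) * aᴴ * a * mpow φ (1 / 2))).re) ↔
      ∃ y : Matrix (Fin n) (Fin n) ℂ, k = mpow φ (1 / 2) * y := by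
  set ψ := mpow φ (1 / 2)
  have hψ : ψᴴ = ψ := (isHermitian_mpow φ (1 / 2)).eq
  have re_trace_ψ_eq_sq_norm (a : Matrix (Fin n) (Fin n) ℂ) :
      RCLike.re (ψ * aᴴ * a * ψ).trace = ‖a * ψ‖ ^ 2 := by
    nth_rw 1 [← hψ]
    exact re_trace_conjTranspose_mul_conjTranspose_mul_mul a ψ
  simp only [← RCLike.re_to_complex, re_trace_conjTranspose_mul_conjTranspose_mul_mul,
    re_trace_ψ_eq_sq_norm]
  constructor
  · rintro ⟨C, -, hC⟩
    refine exists_eq_mul_of_range_toLin'_le (range_toLin'_le_of_forall_mul_eq_zero fun a ha => ?_)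
    have hak := hC a
    rw [ha, norm_zero] at hak
    simpa using hak
  · rintro ⟨y, rfl⟩
    refine ⟨‖y‖ ^ 2, by positivity, fun a => ?_⟩
    calc ‖a * (ψ * y)‖ ^ 2 = ‖a * ψ * y‖ ^ 2 := by rw [Matrix.mul_assoc]
      _ ≤ (‖a * ψ‖ * ‖y‖) ^ 2 := by gcongr; exact frobenius_norm_mul _ _
      _ = ‖y‖ ^ 2 * ‖a * ψ‖ ^ 2 := by ring

theorem majorization_iff_factors {n : ℕ}
    (φ k : Matrix (Fin n) (Fin n) ℂ) (hφ : φ.PosSemidef) :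
    (∃ C : ℝ, 0 ≤ C ∧ ∀ a : Matrix (Fin n) (Fin n) ℂ,
        (Matrix.trace (kᴴ * aᴴ * a * k)).re ≤
          C * (Matrix.trace (mpow φ (1 / 2) * aᴴ * a * mpow φ (1 / 2))).re) ↔
      ∃ y : Matrix (Fin n) (Fin n) ℂ, k = mpow φ (1 / 2) * y :=
  majorization_iff_factors_general φ k
end
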